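/- arXiv:1306.5489 — 8 statements merged into one kernel-verified Lean document; each statement's English description precedes it below -/
import Mathlib

section
/- Let n ≥ 1 and let J : ℂⁿ → ℂⁿ be an ℝ-linear map with J∘J = −Id. Then the following are equivalent: (a) ω(u, Ju) > 0 for every u ∈ ℂⁿ, u ≠ 0 (i.e. J is tamed by the standard symplectic form ω); (b) the ℝ-linear map J_st + J : v ↦ iv + Jv is invertible and the ℝ-linear map 𝒜 = (J_st + J)^{−1} ∘ (J_st − J) (where (J_st − J)v = iv − Jv) has operator norm strictly less than 1 with respect to the Euclidean norm on ℂⁿ. Moreover, when these hold, 𝒜 is complex anti-linear: 𝒜(iv) = −i·𝒜(v) for all v ∈ ℂⁿ. -/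
noncomputable def stdSymplecticForm {n : ℕ}
    (u v : EuclideanSpace ℂ (Fin n)) : ℝ :=
  ∑ j, ((starRingEnd ℂ) (u j) * v j).im

section aux
variable {n : ℕ}

lemma stdSymp_eq_im (u v : EuclideanSpace ℂ (Fin n)) :
    stdSymplecticForm u v = (inner ℂ u v : ℂ).im := by
  simp [stdSymplecticForm, PiLp.inner_apply, RCLike.inner_apply, Complex.im_sum]
  exact Finset.sum_congr rfl (fun _ _ => by ring)

lemma norm_diff_identity (x y : EuclideanSpace ℂ (Fin n)) :
    ‖x + y‖^2 - ‖x - y‖^2 = 4 * (inner ℂ x y : ℂ).re := by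
  have h1 := @norm_add_sq ℂ _ _ _ _ x y
  have h2 := @norm_sub_sq ℂ _ _ _ _ x y
  simp only [RCLike.re_to_complex] at h1 h2
  rw [h1, h2]; ring

lemma key_identity (J : EuclideanSpace ℂ (Fin n) →L[ℝ] EuclideanSpace ℂ (Fin n))
    (v : EuclideanSpace ℂ (Fin n)) :
    ‖Complex.I • v + J v‖^2 - ‖Complex.I • v - J v‖^2
      = 4 * stdSymplecticForm v (J v) := by
  rw [stdSymp_eq_im, norm_diff_identity (Complex.I • v) (J v), inner_smul_left]
  simp [Complex.mul_re]

end aux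

section aux2
variable {n : ℕ} (J : EuclideanSpace ℂ (Fin n) →L[ℝ] EuclideanSpace ℂ (Fin n))
  (hJ : ∀ v, J (J v) = -v)

lemma II_smul (v : EuclideanSpace ℂ (Fin n)) : Complex.I • Complex.I • v = -v := by
  rw [smul_smul, Complex.I_mul_I, neg_one_smul]

include hJ in
lemma QP_anti (v : EuclideanSpace ℂ (Fin n)) :
    Complex.I • (Complex.I • v + J v) - J (Complex.I • v + J v)
      = -(Complex.I • (Complex.I • v - J v) + J (Complex.I • v - J v)) := by
  simp only [smul_add, smul_sub, map_add, map_sub, hJ, II_smul, neg_add, neg_sub]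
  abel

lemma QiP_eq_PiQ (v : EuclideanSpace ℂ (Fin n)) :
    Complex.I • (Complex.I • (Complex.I • v + J v)) - J (Complex.I • (Complex.I • v + J v))
      = Complex.I • (Complex.I • (Complex.I • v - J v))
          + J (Complex.I • (Complex.I • v - J v)) := by
  simp only [smul_add, smul_sub, II_smul, map_add, map_sub, map_neg, smul_neg]
  abel

end aux2

section main
variable {n : ℕ} (hn : 1 ≤ n)
  (J : EuclideanSpace ℂ (Fin n) →L[ℝ] EuclideanSpace ℂ (Fin n))
  (hJ : ∀ v, J (J v) = -v)

/-- `P = J_st + J` as a continuous linear map. -/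
noncomputable def Pmap : EuclideanSpace ℂ (Fin n) →L[ℝ] EuclideanSpace ℂ (Fin n) :=
  Complex.I • ContinuousLinearMap.id ℝ (EuclideanSpace ℂ (Fin n)) + J

/-- `Q = J_st - J` as a continuous linear map. -/
noncomputable def Qmap : EuclideanSpace ℂ (Fin n) →L[ℝ] EuclideanSpace ℂ (Fin n) :=
  Complex.I • ContinuousLinearMap.id ℝ (EuclideanSpace ℂ (Fin n)) - J

lemma Pmap_apply (v) : Pmap J v = Complex.I • v + J v := rfl
lemma Qmap_apply (v) : Qmap J v = Complex.I • v - J v := rfl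

lemma tame_inj
    (htame : ∀ u : EuclideanSpace ℂ (Fin n), u ≠ 0 → 0 < stdSymplecticForm u (J u)) :
    Function.Injective (Pmap J) := by
  intro v w hvw
  have hz : Pmap J (v - w) = 0 := by rw [map_sub, hvw, sub_self]
  rw [← sub_eq_zero]
  set u := v - w with hu
  by_contra h
  have hk := key_identity J u
  have ht := htame u h
  have hsq : (0:ℝ) ≤ ‖Complex.I • u - J u‖^2 := sq_nonneg _
  have hPv : Complex.I • u + J u = 0 := hz
  rw [hPv] at hk
  simp at hk
  nlinarith

lemma tame_bij
    (htame : ∀ u : EuclideanSpace ℂ (Fin n), u ≠ 0 → 0 < stdSymplecticForm u (J u)) :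
    Function.Bijective (Pmap J) := by
  have hinj := tame_inj J htame
  exact ⟨hinj, LinearMap.injective_iff_surjective.mp hinj⟩


lemma tame_norm_lt
    (htame : ∀ u : EuclideanSpace ℂ (Fin n), u ≠ 0 → 0 < stdSymplecticForm u (J u))
    (v : EuclideanSpace ℂ (Fin n)) (hv : v ≠ 0) :
    ‖Qmap J v‖ < ‖Pmap J v‖ := by
  have hk := key_identity J v
  have ht := htame v hv
  have h1 : (0:ℝ) ≤ ‖Qmap J v‖ := norm_nonneg _
  have h2 : (0:ℝ) ≤ ‖Pmap J v‖ := norm_nonneg _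
  rw [Pmap_apply, Qmap_apply]
  rw [Pmap_apply, Qmap_apply] at *
  nlinarith [hk, ht]


include hJ in
lemma QP_anti' (v : EuclideanSpace ℂ (Fin n)) :
    Qmap J (Pmap J v) = -(Pmap J (Qmap J v)) := QP_anti J hJ v

lemma QiP' (v : EuclideanSpace ℂ (Fin n)) :
    Qmap J (Complex.I • Pmap J v) = Pmap J (Complex.I • Qmap J v) := QiP_eq_PiQ J v

include hn hJ in
theorem tamed_iff_complex_matrix_norm_lt_one' :
    ((∀ u : EuclideanSpace ℂ (Fin n), u ≠ 0 → 0 < stdSymplecticForm u (J u)) ↔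
      (Function.Bijective (fun v : EuclideanSpace ℂ (Fin n) => Complex.I • v + J v) ∧
        ∃ A : EuclideanSpace ℂ (Fin n) →L[ℝ] EuclideanSpace ℂ (Fin n),
          (∀ v, Complex.I • (A v) + J (A v) = Complex.I • v - J v) ∧ ‖A‖ < 1)) ∧
    ((∀ u : EuclideanSpace ℂ (Fin n), u ≠ 0 → 0 < stdSymplecticForm u (J u)) →
      ∀ A : EuclideanSpace ℂ (Fin n) →L[ℝ] EuclideanSpace ℂ (Fin n),
        (∀ v, Complex.I • (A v) + J (A v) = Complex.I • v - J v) →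
          ∀ v, A (Complex.I • v) = -(Complex.I • (A v))) := by
  constructor
  · constructor
    · intro htame
      have hbij := tame_bij J htame
      refine ⟨hbij, ?_⟩
      set e := LinearEquiv.ofBijective (Pmap J).toLinearMap hbij with he
      set A : EuclideanSpace ℂ (Fin n) →L[ℝ] EuclideanSpace ℂ (Fin n) :=
        LinearMap.toContinuousLinearMap
          (e.symm.toLinearMap ∘ₗ (Qmap J).toLinearMap) with hA
      have hPA : ∀ v, Pmap J (A v) = Qmap J v := by
        intro v
        show Pmap J (e.symm (Qmap J v)) = Qmap J v
        exact e.apply_symm_apply (Qmap J v)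
      have hAP : ∀ v, A (Pmap J v) = -(Qmap J v) := by
        intro v
        apply hbij.1
        show Pmap J _ = Pmap J _
        rw [hPA, map_neg, QP_anti' J hJ v]
      have hAlt : ∀ w, w ≠ 0 → ‖A w‖ < ‖w‖ := by
        intro w hw
        obtain ⟨v, rfl⟩ := hbij.2 w
        have hv : v ≠ 0 := by rintro rfl; simp at hw
        rw [hAP v, norm_neg]
        exact tame_norm_lt J htame v hv
      have hx1mem : (EuclideanSpace.single (⟨0, hn⟩ : Fin n) (1:ℂ)) ∈
          Metric.sphere (0 : EuclideanSpace ℂ (Fin n)) 1 := by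
        simp [EuclideanSpace.norm_single]
      obtain ⟨x₀, hx₀mem, hmax⟩ := (isCompact_sphere (0 : EuclideanSpace ℂ (Fin n)) 1).exists_isMaxOn
        ⟨_, hx1mem⟩ ((continuous_norm.comp A.continuous).continuousOn)
      have hx₀norm : ‖x₀‖ = 1 := by simpa using hx₀mem
      have hx₀ne : x₀ ≠ 0 := by
        intro h; rw [h] at hx₀norm; simp at hx₀norm
      have hc : ‖A x₀‖ < 1 := by
        have := hAlt x₀ hx₀ne; rwa [hx₀norm] at this
      have hbound : ‖A‖ ≤ ‖A x₀‖ := by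
        apply ContinuousLinearMap.opNorm_le_of_unit_norm (norm_nonneg _)
        intro x hx
        have hxs : x ∈ Metric.sphere (0 : EuclideanSpace ℂ (Fin n)) 1 := by simp [hx]
        exact isMaxOn_iff.mp hmax x hxs
      exact ⟨A, fun v => hPA v, lt_of_le_of_lt hbound hc⟩
    · rintro ⟨hbij, A, hA, hAnorm⟩ u hu
      have hbij' : Function.Bijective (Pmap J) := hbij
      have hPA : ∀ v, Pmap J (A v) = Qmap J v := hA
      have hPu : Pmap J u ≠ 0 := by
        intro h
        exact hu (hbij'.1 (by rw [h, map_zero]))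
      have hAPu : A (Pmap J u) = -(Qmap J u) := by
        apply hbij'.1
        show Pmap J _ = Pmap J _
        rw [hPA, map_neg, QP_anti' J hJ u]
      have hlt : ‖Qmap J u‖ < ‖Pmap J u‖ := by
        calc ‖Qmap J u‖ = ‖A (Pmap J u)‖ := by rw [hAPu, norm_neg]
          _ ≤ ‖A‖ * ‖Pmap J u‖ := A.le_opNorm _
          _ < 1 * ‖Pmap J u‖ :=
              mul_lt_mul_of_pos_right hAnorm (norm_pos_iff.mpr hPu)
          _ = ‖Pmap J u‖ := one_mul _
      have hk := key_identity J u
      rw [← Pmap_apply, ← Qmap_apply] at hk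
      nlinarith [norm_nonneg (Qmap J u), norm_nonneg (Pmap J u)]
  · intro htame A hA v
    have hbij := tame_bij J htame
    have hPA : ∀ w, Pmap J (A w) = Qmap J w := hA
    obtain ⟨u, rfl⟩ := hbij.2 v
    have h1 : A (Pmap J u) = -(Qmap J u) := by
      apply hbij.1
      show Pmap J _ = Pmap J _
      rw [hPA, map_neg, QP_anti' J hJ u]
    have h2 : A (Complex.I • Pmap J u) = Complex.I • Qmap J u := by
      apply hbij.1
      show Pmap J _ = Pmap J _
      rw [hPA, QiP' J u]
    rw [h2, h1, smul_neg, neg_neg]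

end main

/-- A linear almost complex structure `J` on `ℂⁿ` is tamed by the standard symplectic
form `ω` if and only if `J_st + J` is invertible and the operator
`𝒜 = (J_st + J)⁻¹ ∘ (J_st − J)` has Euclidean operator norm `< 1`;
moreover, in that case `𝒜` is complex anti-linear. -/
theorem tamed_iff_complex_matrix_norm_lt_one (n : ℕ) (hn : 1 ≤ n)
    (J : EuclideanSpace ℂ (Fin n) →L[ℝ] EuclideanSpace ℂ (Fin n))
    (hJ : ∀ v, J (J v) = -v) :
    ((∀ u : EuclideanSpace ℂ (Fin n), u ≠ 0 → 0 < stdSymplecticForm u (J u)) ↔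
      (Function.Bijective (fun v : EuclideanSpace ℂ (Fin n) => Complex.I • v + J v) ∧
        ∃ A : EuclideanSpace ℂ (Fin n) →L[ℝ] EuclideanSpace ℂ (Fin n),
          (∀ v, Complex.I • (A v) + J (A v) = Complex.I • v - J v) ∧ ‖A‖ < 1)) ∧
    ((∀ u : EuclideanSpace ℂ (Fin n), u ≠ 0 → 0 < stdSymplecticForm u (J u)) →
      ∀ A : EuclideanSpace ℂ (Fin n) →L[ℝ] EuclideanSpace ℂ (Fin n),
        (∀ v, Complex.I • (A v) + J (A v) = Complex.I • v - J v) →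
          ∀ v, A (Complex.I • v) = -(Complex.I • (A v))) :=
  tamed_iff_complex_matrix_norm_lt_one' hn J hJ
end

section
/- Let f : ℂ → ℂ be continuous with compact support contained in the open unit disc 𝔻, and let g(t) = f(t)/(t−1). Define the Vekua-modified Cauchy–Green operator T₁f(ζ) = (ζ−1)·( Tg(ζ) + ζ^{−1}·conj( Tg(1/conj(ζ)) ) ). Then for every ζ ∈ b𝔻 (the unit circle) with ζ ≠ 0, Re T₁f(ζ) = 0. -/
open Metric MeasureTheory

/-- The Cauchy–Green operator
`Tf(ζ) = (1/(2πi)) ∬_𝔻 f(t)/(t−ζ) dt∧dt̄ = −(1/π) ∬_𝔻 f(t)/(t−ζ) dA(t)`. -/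
noncomputable def cauchyGreen (f : ℂ → ℂ) (ζ : ℂ) : ℂ :=
  -(Real.pi : ℂ)⁻¹ * ∫ t in ball (0 : ℂ) 1, f t / (t - ζ)

/-- The Vekua-modified Cauchy–Green operator with weight `Q(ζ) = ζ − 1`:
`T₁f(ζ) = (ζ−1)·( T(f/Q)(ζ) + ζ⁻¹·conj( T(f/Q)(1/conj ζ) ) )`. -/
noncomputable def vekuaT1 (f : ℂ → ℂ) (ζ : ℂ) : ℂ :=
  (ζ - 1) * (cauchyGreen (fun t => f t / (t - 1)) ζ
    + ζ⁻¹ * (starRingEnd ℂ) (cauchyGreen (fun t => f t / (t - 1)) (1 / (starRingEnd ℂ) ζ)))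

/-- Boundary property of the operator `T₁`: for `f` continuous with compact support
in the unit disc, `Re T₁f = 0` on the unit circle. -/
theorem vekuaT1_re_zero_on_circle (f : ℂ → ℂ) (hf : Continuous f)
    (hsupp : HasCompactSupport f) (hsupp' : tsupport f ⊆ ball (0 : ℂ) 1) :
    ∀ ζ : ℂ, ‖ζ‖ = 1 → ζ ≠ 0 → (vekuaT1 f ζ).re = 0 := by
  intro ζ hζ hζ0
  have hmc : ζ * (starRingEnd ℂ) ζ = 1 := by
    rw [Complex.mul_conj]
    norm_cast
    rw [Complex.normSq_eq_norm_sq, hζ]; norm_num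
  have hinv : ζ⁻¹ = (starRingEnd ℂ) ζ := by
    field_simp
    linear_combination -hmc
  have hfix : 1 / (starRingEnd ℂ) ζ = ζ := by
    rw [one_div, ← hinv, inv_inv]
  set z := cauchyGreen (fun t => f t / (t - 1)) ζ with hz
  have : vekuaT1 f ζ = (ζ - 1) * z - (starRingEnd ℂ) ((ζ - 1) * z) := by
    rw [vekuaT1, hfix, ← hz, mul_add, hinv]
    rw [map_mul, map_sub, map_one]
    ring_nf
    linear_combination ((starRingEnd ℂ) z) * hmc
  rw [this, Complex.sub_re, Complex.conj_re, sub_self]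
end

section
/- There exists a unique continuous function R : closure(𝔻) → ℂ such that R(ζ)⁴ = −(ζ²−1)(ζ−i)² for all ζ ∈ closure(𝔻) and R(0) = e^{3πi/4}. (R is the branch of e^{3πi/4}(ζ−1)^{1/4}(ζ+1)^{1/4}(ζ−i)^{1/2} continuous on the closed unit disc.) -/
open Metric

noncomputable def R0fun (ζ : ℂ) : ℂ :=
  -((1 - ζ) ^ ((4 : ℂ))⁻¹ * (1 + ζ) ^ ((4 : ℂ))⁻¹ * (ζ - Complex.I) ^ ((2 : ℂ))⁻¹)

lemma quarter_pow (z : ℂ) : (z ^ ((4 : ℂ))⁻¹) ^ 4 = z := by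
  have := Complex.cpow_nat_inv_pow z (n := 4) (by norm_num)
  simpa using this

lemma half_pow (z : ℂ) : (z ^ ((2 : ℂ))⁻¹) ^ 2 = z := by
  have := Complex.cpow_nat_inv_pow z (n := 2) (by norm_num)
  simpa using this

lemma R0fun_pow (ζ : ℂ) : R0fun ζ ^ 4 = -((ζ ^ 2 - 1) * (ζ - Complex.I) ^ 2) := by
  have h3 : ((ζ - Complex.I) ^ ((2 : ℂ))⁻¹) ^ 4 = (ζ - Complex.I) ^ 2 := by
    rw [show (4 : ℕ) = 2 * 2 from rfl, pow_mul, half_pow]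
  rw [R0fun, neg_pow, mul_pow, mul_pow, quarter_pow, quarter_pow, h3]
  ring

lemma R0fun_zero : R0fun 0 = Complex.exp (3 * Real.pi * Complex.I / 4) := by
  rw [R0fun]
  simp only [sub_zero, add_zero, zero_sub, Complex.one_cpow, one_mul]
  rw [Complex.cpow_def_of_ne_zero (by simp) _, Complex.log_neg_I]
  rw [show (3 * (Real.pi : ℂ) * Complex.I / 4) = Real.pi * Complex.I + -(Real.pi / 2) * Complex.I * (2 : ℂ)⁻¹ by ring,
    Complex.exp_add, Complex.exp_pi_mul_I]
  ring

lemma R0fun_contOn : ContinuousOn R0fun (closedBall (0 : ℂ) 1) := by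
  intro z hz
  have hz1 : ‖z‖ ≤ 1 := by simpa [Complex.dist_eq] using hz
  have hre : z.re ≤ 1 := le_trans (Complex.re_le_norm z) hz1
  have hw4 : (0 : ℝ) < ((4 : ℂ))⁻¹.re := by norm_num [Complex.inv_re, Complex.normSq]
  have hw2 : (0 : ℝ) < ((2 : ℂ))⁻¹.re := by norm_num [Complex.inv_re, Complex.normSq]
  have h1 : ContinuousAt (fun ζ : ℂ => (1 - ζ) ^ ((4 : ℂ))⁻¹) z := by
    refine (Complex.continuousAt_cpow_const_of_re_pos ?_ hw4).comp (by fun_prop)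
    left; simp [Complex.sub_re]; linarith
  have h2 : ContinuousAt (fun ζ : ℂ => (1 + ζ) ^ ((4 : ℂ))⁻¹) z := by
    refine (Complex.continuousAt_cpow_const_of_re_pos ?_ hw4).comp (by fun_prop)
    left
    have : -1 ≤ z.re := by
      have := neg_le_of_abs_le (le_trans (Complex.abs_re_le_norm z) hz1)
      linarith
    simp [Complex.add_re]; linarith
  have h3 : ContinuousAt (fun ζ : ℂ => (ζ - Complex.I) ^ ((2 : ℂ))⁻¹) z := by
    refine (Complex.continuousAt_cpow_const_of_re_pos ?_ hw2).comp (by fun_prop)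
    by_cases him : z.im = 1
    · left
      have hns : Complex.normSq z ≤ 1 := by
        have := Complex.sq_norm z
        nlinarith [norm_nonneg z]
      rw [Complex.normSq_apply, him] at hns
      simp only [Complex.sub_re, Complex.I_re, sub_zero]
      nlinarith [sq_nonneg z.re]
    · right; simp [Complex.sub_im]; intro h; exact him (by linarith)
  exact (((h1.mul h2).mul h3).neg).continuousWithinAt

lemma rhs_ne_zero {ζ : ℂ} (h1 : ζ ≠ 1) (h2 : ζ ≠ -1) (h3 : ζ ≠ Complex.I) :
    -((ζ ^ 2 - 1) * (ζ - Complex.I) ^ 2) ≠ 0 := by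
  rw [neg_ne_zero]
  refine mul_ne_zero ?_ (pow_ne_zero _ (sub_ne_zero.mpr h3))
  intro h
  have : (ζ - 1) * (ζ + 1) = 0 := by linear_combination h
  rcases mul_eq_zero.mp this with h | h
  · exact h1 (by linear_combination h)
  · exact h2 (by linear_combination h)

/-- There exists a unique continuous function `R` on the closed unit disc with
`R(ζ)⁴ = −(ζ²−1)(ζ−i)²` and `R(0) = e^{3πi/4}`; it is the continuous branch of
`e^{3πi/4}(ζ−1)^{1/4}(ζ+1)^{1/4}(ζ−i)^{1/2}`. -/
theorem exists_unique_branch_R :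
    ∃! R : (closedBall (0 : ℂ) 1) → ℂ,
      Continuous R ∧
      (∀ ζ : closedBall (0 : ℂ) 1,
        (R ζ) ^ 4 = -(((ζ : ℂ) ^ 2 - 1) * ((ζ : ℂ) - Complex.I) ^ 2)) ∧
      R ⟨0, by simp⟩ = Complex.exp (3 * Real.pi * Complex.I / 4) := by
  set D : Set ℂ := closedBall (0 : ℂ) 1 with hD
  refine ⟨fun x => R0fun x, ⟨?_, fun ζ => R0fun_pow ζ, R0fun_zero⟩, ?_⟩
  · exact R0fun_contOn.comp_continuous continuous_subtype_val (fun x => x.2)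
  · rintro R ⟨hRc, hRpow, hR0⟩
    -- the bad set
    set T : Set ℂ := {1, -1, Complex.I} with hT
    set S : Set D := (Subtype.val : D → ℂ) ⁻¹' Tᶜ with hS
    have hball : ball (0 : ℂ) 1 ⊆ D ∩ Tᶜ := by
      intro z hz
      have hz1 : ‖z‖ < 1 := by simpa [Complex.dist_eq] using hz
      refine ⟨ball_subset_closedBall hz, ?_⟩
      simp only [hT, Set.mem_insert_iff, Set.mem_singleton_iff, Set.mem_compl_iff]
      push_neg
      refine ⟨?_, ?_, ?_⟩ <;> rintro rfl <;> simp at hz1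
    have hSconn : IsPreconnected S := by
      rw [← Topology.IsInducing.subtypeVal.isPreconnected_image]
      rw [hS, Subtype.image_preimage_coe]
      exact (convex_ball (0 : ℂ) 1).isPreconnected.subset_closure hball
        (by rw [closure_ball (0 : ℂ) one_ne_zero]; exact Set.inter_subset_left)
    have hy : (⟨0, by simp [hD]⟩ : D) ∈ S := by
      show (0 : ℂ) ∈ Tᶜ
      simp only [hT, Set.mem_compl_iff, Set.mem_insert_iff, Set.mem_singleton_iff]
      push_neg
      exact ⟨by norm_num, by norm_num, fun h => Complex.I_ne_zero h.symm⟩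
    have hne : ∀ {x : D}, x ∈ S → R0fun (x : ℂ) ≠ 0 := by
      intro x hx
      simp only [hS, hT, Set.mem_preimage, Set.mem_compl_iff, Set.mem_insert_iff,
        Set.mem_singleton_iff] at hx
      push_neg at hx
      intro h
      exact rhs_ne_zero hx.1 hx.2.1 hx.2.2 (by rw [← R0fun_pow (x : ℂ), h]; ring)
    have hR0c : Continuous fun x : D => R0fun (x : ℂ) :=
      R0fun_contOn.comp_continuous continuous_subtype_val (fun x => x.2)
    have hsq4 : Set.EqOn ((fun x : D => R x ^ 2) ^ 2) ((fun x : D => R0fun (x : ℂ) ^ 2) ^ 2) S := by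
      intro x _
      show (R x ^ 2) ^ 2 = (R0fun (x : ℂ) ^ 2) ^ 2
      rw [← pow_mul, ← pow_mul]
      rw [show 2 * 2 = 4 from rfl, hRpow x, R0fun_pow]
    have step1 : Set.EqOn (fun x : D => R x ^ 2) (fun x : D => R0fun (x : ℂ) ^ 2) S := by
      refine hSconn.eq_of_sq_eq ((hRc.pow 2).continuousOn) ((hR0c.pow 2).continuousOn)
        hsq4 (fun {x} hx => pow_ne_zero _ (hne hx)) hy ?_
      show R _ ^ 2 = R0fun 0 ^ 2
      rw [hR0, R0fun_zero]
    have step2 : Set.EqOn R (fun x : D => R0fun (x : ℂ)) S := by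
      refine hSconn.eq_of_sq_eq hRc.continuousOn hR0c.continuousOn
        (fun x hx => step1 hx) (fun {x} hx => hne hx) hy ?_
      show R _ = R0fun 0
      rw [hR0, R0fun_zero]
    funext x
    by_cases hx : x ∈ S
    · exact step2 hx
    · -- x is one of the bad points, both sides vanish
      simp only [hS, Set.mem_preimage, Set.mem_compl_iff, not_not] at hx
      have hzero : -(((x : ℂ)) ^ 2 - 1) * ((x : ℂ) - Complex.I) ^ 2 = 0 := by
        rcases hx with h | h | h <;> rw [h] <;> ring_nf <;> simp [Complex.I_sq]
      have hz' : -((((x : ℂ)) ^ 2 - 1) * ((x : ℂ) - Complex.I) ^ 2) = 0 := by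
        linear_combination hzero
      have h1 : R x = 0 := by
        have := hRpow x; rw [hz'] at this; exact pow_eq_zero_iff (by norm_num) |>.mp this
      have h2 : R0fun (x : ℂ) = 0 := by
        have := R0fun_pow (x : ℂ); rw [hz'] at this
        exact pow_eq_zero_iff (by norm_num) |>.mp this
      rw [h1, h2]
end

section
/- Let R : closure(𝔻) → ℂ be the unique continuous function with R(ζ)⁴ = −(ζ²−1)(ζ−i)² and R(0) = e^{3πi/4}. Let f : ℂ → ℂ be continuous with compact support in 𝔻, set g(t) = f(t)/R(t), and define T₂f(ζ) = R(ζ)·( Tg(ζ) + ζ^{−1}·conj( Tg(1/conj(ζ)) ) ). Then for every ζ ∈ b𝔻 with ζ ∉ {1, −1, i}, the number ζ·( T₂f(ζ)/R(ζ) )² is a nonnegative real number; equivalently, T₂f(ζ) lies on the real line ℝ·X(ζ) spanned by X(ζ) = R(ζ)/√ζ. In particular T₂f satisfies the boundary conditions Im((1+i)T₂f(ζ)) = 0 on the arc {e^{iθ} : 0<θ<π/2}, Im((1−i)T₂f(ζ)) = 0 on {e^{iθ} : π/2<θ<π}, and Im T₂f(ζ) = 0 on {e^{iθ} : π<θ<2π}.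 -/
open Metric MeasureTheory Real

/-- The modified Cauchy–Green operator with weight `R`:
`T₂f(ζ) = R(ζ)·( T(f/R)(ζ) + ζ⁻¹·conj( T(f/R)(1/conj ζ) ) )`. -/
noncomputable def weightedT2 (R f : ℂ → ℂ) (ζ : ℂ) : ℂ :=
  R ζ * (cauchyGreen (fun t => f t / R t) ζ
    + ζ⁻¹ * (starRingEnd ℂ) (cauchyGreen (fun t => f t / R t) (1 / (starRingEnd ℂ) ζ)))

open Complex
lemma exp_sub_exp (a b : ℝ) : Complex.exp (a*I) - Complex.exp (b*I)
    = Complex.exp ((((a+b)/2 : ℝ))*I) * (2*I*(Real.sin ((a-b)/2) : ℝ)) := by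
  rw [Complex.ofReal_sin, Complex.sin]
  have h1 : Complex.exp ((((a+b)/2 : ℝ))*I) * Complex.exp ((((a-b)/2 : ℝ))*I) = Complex.exp (a*I) := by
    rw [← Complex.exp_add]; congr 1; push_cast; ring
  have h2 : Complex.exp ((((a+b)/2 : ℝ))*I) * Complex.exp ((-(((a-b)/2 : ℝ):ℂ))*I) = Complex.exp (b*I) := by
    rw [← Complex.exp_add]; congr 1; push_cast; ring
  have hI : (I:ℂ) * I = -1 := Complex.I_mul_I
  linear_combination -h1 + h2 - Complex.exp (↑((a + b) / 2) * I) * (Complex.exp (-↑((a - b) / 2) * I) - Complex.exp (↑((a - b) / 2) * I)) * hI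

lemma im_eq_zero_of_sq (w : ℂ) (h : (w^2).im = 0) (h2 : 0 ≤ (w^2).re) : w.im = 0 := by
  have hi : w.re * w.im + w.im * w.re = 0 := by
    have := h; rw [sq, Complex.mul_im] at this; linarith
  have hr : 0 ≤ w.re * w.re - w.im * w.im := by
    have := h2; rw [sq, Complex.mul_re] at this; linarith
  have hab : w.re * w.im = 0 := by linarith
  rcases mul_eq_zero.1 hab with h0 | h0
  · rw [h0] at hr; nlinarith [mul_self_nonneg w.im]
  · exact h0
lemma cpow_half_unique (w z : ℂ) (hw : 0 < w.re) (hz : 0 < z.re) (h : z^2 = w) : w ^ ((1:ℂ)/2) = z := by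
  have hw0 : w ≠ 0 := by intro h0; rw [h0] at hw; simp at hw
  have hsq : (w ^ ((1:ℂ)/2))^2 = w := by
    rw [sq, ← Complex.cpow_add _ _ hw0]; norm_num
  have harg : |Complex.arg w| < Real.pi / 2 := Complex.abs_arg_lt_pi_div_two_iff.2 (Or.inl hw)
  have hre : 0 < (w ^ ((1:ℂ)/2)).re := by
    rw [Complex.cpow_def_of_ne_zero hw0, Complex.exp_re]
    apply mul_pos (Real.exp_pos _)
    apply Real.cos_pos_of_mem_Ioo
    have him : (Complex.log w * (1/2)).im = Complex.arg w / 2 := by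
      simp [Complex.mul_im, Complex.log_im]; ring
    rw [him]
    constructor
    · cases abs_lt.1 harg; linarith
    · cases abs_lt.1 harg; linarith
  -- now (w^(1/2))^2 = z^2, both re > 0
  have hfac : (w ^ ((1:ℂ)/2) - z) * (w ^ ((1:ℂ)/2) + z) = 0 := by
    have : (w ^ ((1:ℂ)/2))^2 - z^2 = 0 := by rw [hsq, h]; ring
    linear_combination this
  rcases mul_eq_zero.1 hfac with h0 | h0
  · exact sub_eq_zero.1 h0
  · exfalso
    have : (w ^ ((1:ℂ)/2)).re + z.re = 0 := by
      have := congrArg Complex.re h0; simpa using this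
    linarith

lemma re_pos_aux {ζ : ℂ} (hζ : ζ ∈ closedBall (0:ℂ) 1) (h1 : ζ ≠ 1) (h2 : ζ ≠ -1) :
    0 < (1 - ζ^2).re := by
  have habs : ‖ζ‖ ≤ 1 := by
    simpa using mem_closedBall_zero_iff.1 hζ
  have h2abs : ‖ζ^2‖ ≤ 1 := by
    rw [norm_pow]; exact pow_le_one₀ (norm_nonneg _) habs
  have hre : (ζ^2).re ≤ 1 := le_trans (Complex.re_le_norm _) h2abs
  rcases lt_or_eq_of_le hre with h | h
  · simp [Complex.sub_re]; linarith
  · exfalso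
    have him : (ζ^2).im = 0 := by
      have hn : Complex.normSq (ζ^2) ≤ 1 := by
        rw [← Complex.sq_norm]; nlinarith [norm_nonneg (ζ^2)]
      have h1' := Complex.normSq_apply (ζ^2)
      nlinarith [sq_nonneg (ζ^2).im]
    have hsq : ζ^2 = 1 := by
      apply Complex.ext <;> simp [h, him]
    have : (ζ - 1) * (ζ + 1) = 0 := by linear_combination hsq
    rcases mul_eq_zero.1 this with h0 | h0
    · exact h1 (sub_eq_zero.1 h0)
    · exact h2 (by linear_combination h0)


lemma R_sq_eq (R : ℂ → ℂ) (hRcont : ContinuousOn R (closedBall (0 : ℂ) 1))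
    (hRpow : ∀ ζ ∈ closedBall (0 : ℂ) 1,
      (R ζ) ^ 4 = -((ζ ^ 2 - 1) * (ζ - Complex.I) ^ 2))
    (hR0 : R 0 = Complex.exp (3 * Real.pi * Complex.I / 4)) :
    ∀ ζ ∈ closedBall (0:ℂ) 1, ζ ≠ 1 → ζ ≠ -1 → ζ ≠ I →
      R ζ ^ 2 = (1 - ζ^2) ^ ((1:ℂ)/2) * (ζ - I) := by
  set K : Set ℂ := closedBall (0:ℂ) 1 \ {1, -1, I} with hK
  set v : ℂ → ℂ := fun ζ => (1 - ζ^2) ^ ((1:ℂ)/2) * (ζ - I) with hv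
  have hmemK : ∀ ζ, ζ ∈ closedBall (0:ℂ) 1 → ζ ≠ 1 → ζ ≠ -1 → ζ ≠ I → ζ ∈ K := by
    intro ζ h h1 h2 h3
    exact ⟨h, by simp [h1, h2, h3]⟩
  have h0K : (0:ℂ) ∈ K := by
    refine hmemK 0 (by simp) (by norm_num) (by norm_num) ?_
    intro h; exact Complex.I_ne_zero h.symm
  have hrepos : ∀ ζ ∈ K, 0 < (1 - ζ^2).re := by
    rintro ζ ⟨hb, hs⟩
    simp only [Set.mem_insert_iff, Set.mem_singleton_iff] at hs
    push_neg at hs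
    exact re_pos_aux hb hs.1 hs.2.1
  have hwne : ∀ ζ ∈ K, (1 - ζ^2) ≠ 0 := by
    intro ζ hζ h0
    have := hrepos ζ hζ; rw [h0] at this; simp at this
  have hcpow_sq : ∀ ζ ∈ K, ((1 - ζ^2) ^ ((1:ℂ)/2))^2 = 1 - ζ^2 := by
    intro ζ hζ
    rw [sq, ← Complex.cpow_add _ _ (hwne ζ hζ)]; norm_num
  have hvsq : ∀ ζ ∈ K, (v ζ)^2 = (R ζ)^4 := by
    intro ζ hζ
    have h4 := hRpow ζ hζ.1
    rw [hv]; simp only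
    rw [mul_pow, hcpow_sq ζ hζ, h4]; ring
  have hvne : ∀ ζ ∈ K, v ζ ≠ 0 := by
    intro ζ hζ
    apply mul_ne_zero
    · intro h0
      have := hcpow_sq ζ hζ; rw [h0] at this
      exact hwne ζ hζ (by rw [← this]; ring)
    · intro h0
      have : ζ = I := by linear_combination h0
      exact (hζ.2 (by simp [this]))
  have hRne : ∀ ζ ∈ K, R ζ ≠ 0 := by
    intro ζ hζ h0
    have := hvsq ζ hζ; rw [h0] at this
    exact hvne ζ hζ (by
      have h2 : (v ζ)^2 = 0 := by rw [this]; ring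
      exact pow_eq_zero_iff (by norm_num) |>.1 h2)
  -- continuity of v on K
  have hvcont : ContinuousOn v K := by
    apply ContinuousOn.mul
    · intro ζ hζ
      apply ContinuousAt.continuousWithinAt
      have hslit : (1 - ζ^2) ∈ Complex.slitPlane := mem_slitPlane_iff.2 (Or.inl (hrepos ζ hζ))
      have hc : ContinuousAt (fun z : ℂ => 1 - z^2) ζ :=
        (continuous_const.sub (continuous_pow 2)).continuousAt
      exact hc.cpow continuousAt_const hslit
    · exact (continuous_id.sub continuous_const).continuousOn
  -- preconnectedness of K
  have hKpre : IsPreconnected K := by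
    have hstar : StarConvex ℝ (0:ℂ) K := by
      intro y hy a b ha hb hab
      simp only [smul_zero, zero_add]
      have hy1 : ‖y‖ ≤ 1 := mem_closedBall_zero_iff.1 hy.1
      refine ⟨mem_closedBall_zero_iff.2 ?_, ?_⟩
      · rw [norm_smul, Real.norm_eq_abs, _root_.abs_of_nonneg hb]
        nlinarith
      · intro hmem
        have habs1 : ‖b • y‖ = 1 := by
          simp only [Set.mem_insert_iff, Set.mem_singleton_iff] at hmem
          rcases hmem with h | h | h <;> rw [h] <;>
            simp
        rw [norm_smul, Real.norm_eq_abs, _root_.abs_of_nonneg hb] at habs1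
        have hb1 : b = 1 := by nlinarith
        rw [hb1, one_smul] at hmem
        exact hy.2 hmem
    haveI : ContractibleSpace K := hstar.contractibleSpace ⟨0, h0K⟩
    rw [isPreconnected_iff_preconnectedSpace]
    infer_instance
  -- q values
  have hq2 : ∀ ζ ∈ K, R ζ^2 / v ζ = 1 ∨ R ζ^2 / v ζ = -1 := by
    intro ζ hζ
    apply mul_self_eq_one_iff.1
    rw [div_mul_div_comm, ← sq, ← sq, ← pow_mul, hvsq ζ hζ]
    norm_num
    exact hRne ζ hζ
  have hq0 : R 0^2 / v 0 = 1 := by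
    have hv0 : v 0 = -I := by
      rw [hv]; simp only
      norm_num
    have hexp2 : Complex.exp ((↑(Real.pi/2):ℂ) * I) = I := by
      rw [Complex.exp_mul_I, ← Complex.ofReal_cos, ← Complex.ofReal_sin,
        Real.cos_pi_div_two, Real.sin_pi_div_two]
      simp
    have hR02 : R 0^2 = -I := by
      rw [hR0, sq, ← Complex.exp_add]
      have harg : (3 * (Real.pi:ℂ) * I / 4 + 3 * (Real.pi:ℂ) * I / 4)
          = (Real.pi:ℂ) * I + (↑(Real.pi/2):ℂ) * I := by push_cast; ring
      rw [harg, Complex.exp_add, Complex.exp_pi_mul_I, hexp2]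
      ring
    rw [hv0, hR02]
    simp [Complex.I_ne_zero]
  -- image connectedness argument
  have himg : IsPreconnected ((fun ζ => R ζ^2 / v ζ) '' K) :=
    hKpre.image _ (((hRcont.mono (Set.diff_subset)).pow 2).div hvcont hvne)
  have hdisj : Disjoint {z : ℂ | 0 < z.re} {z : ℂ | z.re < 0} := by
    rw [Set.disjoint_left]
    intro z hz1 hz2
    simp only [Set.mem_setOf_eq] at hz1 hz2
    linarith
  have hsuv : ((fun ζ => R ζ^2 / v ζ) '' K) ⊆ {z : ℂ | 0 < z.re} ∪ {z : ℂ | z.re < 0} := by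
    rintro z ⟨ζ, hζ, rfl⟩
    simp only [Set.mem_union, Set.mem_setOf_eq]
    rcases hq2 ζ hζ with h | h <;> rw [h]
    · left; norm_num
    · right; norm_num
  have hsub : ((fun ζ => R ζ^2 / v ζ) '' K) ⊆ {z : ℂ | 0 < z.re} :=
    IsPreconnected.subset_left_of_subset_union
      (isOpen_lt continuous_const Complex.continuous_re)
      (isOpen_lt Complex.continuous_re continuous_const)
      hdisj hsuv ⟨1, ⟨0, h0K, hq0⟩, by norm_num⟩ himg
  intro ζ hb h1 h2 h3
  have hζK := hmemK ζ hb h1 h2 h3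
  rcases hq2 ζ hζK with h | h
  · have := (div_eq_one_iff_eq (hvne ζ hζK)).1 h
    exact this
  · exfalso
    have := hsub ⟨ζ, hζK, rfl⟩
    simp only [Set.mem_setOf_eq] at this
    rw [h] at this
    norm_num at this
lemma bullet1 (R f : ℂ → ℂ)
    (hRpow : ∀ ζ ∈ closedBall (0 : ℂ) 1,
      (R ζ) ^ 4 = -((ζ ^ 2 - 1) * (ζ - Complex.I) ^ 2))
    (ζ : ℂ) (hζ : ‖ζ‖ = 1) (h1 : ζ ≠ 1) (h2 : ζ ≠ -1) (h3 : ζ ≠ I) :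
    (ζ * (weightedT2 R f ζ / R ζ) ^ 2).im = 0 ∧
    0 ≤ (ζ * (weightedT2 R f ζ / R ζ) ^ 2).re ∧
    (weightedT2 R f ζ)^2
      = ((ζ * (weightedT2 R f ζ / R ζ) ^ 2).re : ℂ) * (R ζ^2 / ζ) := by
  have hζ0 : ζ ≠ 0 := by
    intro h; rw [h] at hζ; simp at hζ
  have hmem : ζ ∈ closedBall (0:ℂ) 1 := by
    rw [mem_closedBall_zero_iff]; rw [hζ]
  have hRne : R ζ ≠ 0 := by
    intro h0
    have h4 := hRpow ζ hmem
    rw [h0] at h4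
    have hz1 : ζ^2 - 1 ≠ 0 := by
      intro hh
      have : (ζ - 1) * (ζ + 1) = 0 := by linear_combination hh
      rcases mul_eq_zero.1 this with h | h
      · exact h1 (sub_eq_zero.1 h)
      · exact h2 (by linear_combination h)
    have hzI : ζ - I ≠ 0 := sub_ne_zero.2 h3
    have : (ζ^2 - 1) * (ζ - I)^2 ≠ 0 := mul_ne_zero hz1 (pow_ne_zero 2 hzI)
    apply this
    have h5 : -((ζ^2-1)*(ζ-I)^2) = 0 := by rw [← h4]; ring
    linear_combination -h5
  set w : ℂ := cauchyGreen (fun t => f t / R t) ζ with hw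
  have hconj : (starRingEnd ℂ) ζ = ζ⁻¹ := (Complex.inv_eq_conj hζ).symm
  have hinv : (1 : ℂ) / (starRingEnd ℂ) ζ = ζ := by
    rw [hconj, one_div, inv_inv]
  have hWdef : weightedT2 R f ζ = R ζ * (w + ζ⁻¹ * (starRingEnd ℂ) w) := by
    rw [weightedT2, hinv]
  have hWR : weightedT2 R f ζ / R ζ = w + ζ⁻¹ * (starRingEnd ℂ) w := by
    rw [hWdef, mul_div_cancel_left₀ _ hRne]
  have hmc : ζ * (starRingEnd ℂ) ζ = 1 := by
    rw [Complex.mul_conj, Complex.normSq_eq_norm_sq, hζ]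
    norm_num
  have hE : ζ * (w + ζ⁻¹ * (starRingEnd ℂ) w)^2
      = ζ * w^2 + (starRingEnd ℂ) (ζ * w^2) + 2 * (w * (starRingEnd ℂ) w) := by
    rw [← hconj]
    simp only [map_mul, map_pow]
    linear_combination (2 * (w * (starRingEnd ℂ) w)
      + (starRingEnd ℂ) ζ * ((starRingEnd ℂ) w)^2) * hmc
  rw [hWR, hE]
  have habs : ‖ζ * w^2‖ = Complex.normSq w := by
    rw [norm_mul, norm_pow, hζ, one_mul, ← Complex.sq_norm]
  have h6 : -Complex.normSq w ≤ (ζ * w^2).re := by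
    have := (abs_le.1 (Complex.abs_re_le_norm (ζ * w^2))).1
    rw [habs] at this
    exact this
  have hww : w * (starRingEnd ℂ) w = ((Complex.normSq w : ℝ) : ℂ) := Complex.mul_conj w
  have him : (ζ * w^2 + (starRingEnd ℂ) (ζ * w^2) + 2 * (w * (starRingEnd ℂ) w)).im = 0 := by
    rw [hww]
    generalize ζ * w^2 = a
    simp
  have hre0 : 0 ≤ (ζ * w^2 + (starRingEnd ℂ) (ζ * w^2) + 2 * (w * (starRingEnd ℂ) w)).re := by
    rw [hww]
    have hexp : (ζ * w^2 + (starRingEnd ℂ) (ζ * w^2) + 2 * ((Complex.normSq w : ℝ) : ℂ)).re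
        = (ζ * w^2).re + (ζ * w^2).re + 2 * Complex.normSq w := by
      generalize ζ * w^2 = a
      simp
    rw [hexp]
    linarith
  refine ⟨him, hre0, ?_⟩
  -- W^2 = re * (R^2/ζ)
  have hEre : (ζ * (w + ζ⁻¹ * (starRingEnd ℂ) w)^2 : ℂ)
      = (((ζ * w^2 + (starRingEnd ℂ) (ζ * w^2) + 2 * (w * (starRingEnd ℂ) w)).re : ℝ) : ℂ) := by
    rw [hE]
    refine Complex.ext (by simp) ?_
    rw [Complex.ofReal_im]
    exact him
  rw [hWdef]
  rw [show (R ζ * (w + ζ⁻¹ * (starRingEnd ℂ) w))^2 = (ζ * (w + ζ⁻¹ * (starRingEnd ℂ) w)^2) * (R ζ^2 / ζ) by field_simp]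
  rw [hEre]



lemma exp_mul_I_add (a b : ℝ) : Complex.exp (a*I) * Complex.exp (b*I)
    = Complex.exp (((a+b : ℝ) : ℂ)*I) := by
  rw [← Complex.exp_add]; push_cast; ring_nf


lemma exp_theta_mem : ∀ θ : ℝ, Complex.exp (θ*I) ∈ closedBall (0:ℂ) 1 := by
  intro θ
  rw [mem_closedBall_zero_iff, Complex.norm_exp_ofReal_mul_I]

lemma exp_ne_one {θ : ℝ} (h : Real.sin θ ≠ 0) : Complex.exp (θ*I) ≠ 1 := by
  intro hh
  apply h
  have := congrArg Complex.im hh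
  rwa [Complex.exp_ofReal_mul_I_im, Complex.one_im] at this

lemma exp_ne_neg_one {θ : ℝ} (h : Real.sin θ ≠ 0) : Complex.exp (θ*I) ≠ -1 := by
  intro hh
  apply h
  have := congrArg Complex.im hh
  rw [Complex.exp_ofReal_mul_I_im] at this
  simpa using this

-- arc1 : θ ∈ (0, π)
lemma arc1_val {θ : ℝ} (h0 : 0 < θ) (hπ : θ < π) :
    (1 - Complex.exp (θ*I)^2) ^ ((1:ℂ)/2) * (Complex.exp (θ*I) - I) / Complex.exp (θ*I)
      = 2*I*((Real.sqrt (2*Real.sin θ) * Real.sin (θ/2 - π/4) : ℝ) : ℂ) := by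
  have hsin : 0 < Real.sin θ := Real.sin_pos_of_pos_of_lt_pi h0 hπ
  have hπ0 := Real.pi_pos
  set r : ℝ := Real.sqrt (2*Real.sin θ) with hr
  set s : ℂ := (r : ℂ) * Complex.exp ((θ/2 - π/4 : ℝ)*I) with hs
  have hz2 : s^2 = 1 - Complex.exp (θ*I)^2 := by
    have e1 : s^2 = ((2*Real.sin θ : ℝ) : ℂ) * Complex.exp ((θ - π/2 : ℝ)*I) := by
      rw [hs, mul_pow, ← Complex.ofReal_pow, Real.sq_sqrt (by positivity), sq, exp_mul_I_add,
        show (θ/2 - π/4 + (θ/2 - π/4) : ℝ) = θ - π/2 by ring]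
    have e2 : (1:ℂ) - Complex.exp (θ*I)^2
        = Complex.exp ((θ:ℝ)*I) * (2*I*((Real.sin (-θ) : ℝ):ℂ)) := by
      have h1' : (1:ℂ) = Complex.exp (((0:ℝ):ℂ)*I) := by simp
      have h2' : Complex.exp (θ*I)^2 = Complex.exp (((2*θ : ℝ):ℂ)*I) := by
        rw [sq, exp_mul_I_add, show (θ + θ : ℝ) = 2*θ by ring]
      rw [h1', h2', exp_sub_exp 0 (2*θ)]
      rw [show ((0 + 2*θ)/2 : ℝ) = θ by ring, show ((0 - 2*θ)/2 : ℝ) = -θ by ring]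
    have e3 : Complex.exp ((θ - π/2 : ℝ)*I)
        = Complex.exp ((θ:ℝ)*I) * Complex.exp ((-(π/2) : ℝ)*I) := by
      rw [exp_mul_I_add]
      rw [show (θ + -(π/2) : ℝ) = θ - π/2 by ring]
    have e4 : Complex.exp ((-(π/2) : ℝ)*I) = -I := by
      rw [Complex.exp_mul_I, ← Complex.ofReal_cos, ← Complex.ofReal_sin,
        Real.cos_neg, Real.sin_neg, Real.cos_pi_div_two, Real.sin_pi_div_two]
      simp
    rw [e1, e2, e3, e4]
    push_cast [Real.sin_neg]
    ring
  have hre : 0 < s.re := by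
    rw [hs, Complex.re_ofReal_mul, Complex.exp_ofReal_mul_I_re]
    apply mul_pos (Real.sqrt_pos.2 (by positivity))
    exact Real.cos_pos_of_mem_Ioo ⟨by linarith, by linarith⟩
  have hwre : 0 < ((1:ℂ) - Complex.exp (θ*I)^2).re := by
    have hsne : Real.sin θ ≠ 0 := ne_of_gt hsin
    exact re_pos_aux (exp_theta_mem θ) (exp_ne_one hsne) (exp_ne_neg_one hsne)
  have hhalf : ((1:ℂ) - Complex.exp (θ*I)^2) ^ ((1:ℂ)/2) = s :=
    cpow_half_unique _ _ hwre hre hz2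
  rw [hhalf]
  -- now s * (exp(θI) - I) / exp(θI)
  have hI : (I:ℂ) = Complex.exp (((π/2 : ℝ):ℂ)*I) := by
    rw [Complex.exp_mul_I, ← Complex.ofReal_cos, ← Complex.ofReal_sin,
      Real.cos_pi_div_two, Real.sin_pi_div_two]
    simp
  have hsub : Complex.exp (θ*I) - I
      = Complex.exp ((((θ + π/2)/2 : ℝ))*I) * (2*I*((Real.sin (θ/2 - π/4) : ℝ):ℂ)) := by
    have h := exp_sub_exp θ (π/2)
    rw [← hI, show ((θ - π/2)/2 : ℝ) = θ/2 - π/4 by ring] at h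
    exact h
  have hcomb : Complex.exp ((θ/2 - π/4 : ℝ)*I) * Complex.exp ((((θ + π/2)/2 : ℝ))*I)
      = Complex.exp ((θ:ℝ)*I) := by
    rw [exp_mul_I_add, show (θ/2 - π/4 + (θ + π/2)/2 : ℝ) = θ by ring]
  have hnum : s * (Complex.exp (θ*I) - I)
      = 2*I*((r * Real.sin (θ/2 - π/4) : ℝ) : ℂ) * Complex.exp ((θ:ℝ)*I) := by
    rw [hs, hsub, ← hcomb]
    push_cast
    ring
  rw [div_eq_iff (Complex.exp_ne_zero _)]
  exact hnum
-- arc3 : θ ∈ (π, 2π)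
lemma arc3_val {θ : ℝ} (h0 : π < θ) (h2π : θ < 2*π) :
    (1 - Complex.exp (θ*I)^2) ^ ((1:ℂ)/2) * (Complex.exp (θ*I) - I) / Complex.exp (θ*I)
      = ((2 * Real.sqrt (-(2*Real.sin θ)) * Real.sin (θ/2 - π/4) : ℝ) : ℂ) := by
  have hπ0 := Real.pi_pos
  have hsin : Real.sin θ < 0 := by
    have h := Real.sin_pos_of_pos_of_lt_pi (x := θ - π) (by linarith) (by linarith)
    rw [Real.sin_sub_pi] at h
    linarith
  set r : ℝ := Real.sqrt (-(2*Real.sin θ)) with hr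
  set s : ℂ := (r : ℂ) * Complex.exp ((θ/2 - 3*π/4 : ℝ)*I) with hs
  have hz2 : s^2 = 1 - Complex.exp (θ*I)^2 := by
    have e1 : s^2 = ((-(2*Real.sin θ) : ℝ) : ℂ) * Complex.exp ((θ - 3*π/2 : ℝ)*I) := by
      rw [hs, mul_pow, ← Complex.ofReal_pow, Real.sq_sqrt (by linarith), sq, exp_mul_I_add,
        show (θ/2 - 3*π/4 + (θ/2 - 3*π/4) : ℝ) = θ - 3*π/2 by ring]
    have e2 : (1:ℂ) - Complex.exp (θ*I)^2
        = Complex.exp ((θ:ℝ)*I) * (2*I*((Real.sin (-θ) : ℝ):ℂ)) := by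
      have h1' : (1:ℂ) = Complex.exp (((0:ℝ):ℂ)*I) := by simp
      have h2' : Complex.exp (θ*I)^2 = Complex.exp (((2*θ : ℝ):ℂ)*I) := by
        rw [sq, exp_mul_I_add, show (θ + θ : ℝ) = 2*θ by ring]
      rw [h1', h2', exp_sub_exp 0 (2*θ)]
      rw [show ((0 + 2*θ)/2 : ℝ) = θ by ring, show ((0 - 2*θ)/2 : ℝ) = -θ by ring]
    have e3 : Complex.exp ((θ - 3*π/2 : ℝ)*I)
        = Complex.exp ((θ:ℝ)*I) * Complex.exp ((-(3*π/2) : ℝ)*I) := by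
      rw [exp_mul_I_add, show (θ + -(3*π/2) : ℝ) = θ - 3*π/2 by ring]
    have e4 : Complex.exp ((-(3*π/2) : ℝ)*I) = I := by
      rw [Complex.exp_mul_I, ← Complex.ofReal_cos, ← Complex.ofReal_sin,
        show (-(3*π/2) : ℝ) = π/2 - 2*π by ring, Real.cos_sub_two_pi, Real.sin_sub_two_pi,
        Real.cos_pi_div_two, Real.sin_pi_div_two]
      simp
    rw [e1, e2, e3, e4]
    push_cast [Real.sin_neg]
    ring
  have hre : 0 < s.re := by
    rw [hs, Complex.re_ofReal_mul, Complex.exp_ofReal_mul_I_re]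
    apply mul_pos (Real.sqrt_pos.2 (by linarith))
    exact Real.cos_pos_of_mem_Ioo ⟨by linarith, by linarith⟩
  have hwre : 0 < ((1:ℂ) - Complex.exp (θ*I)^2).re := by
    have hsne : Real.sin θ ≠ 0 := ne_of_lt hsin
    exact re_pos_aux (exp_theta_mem θ) (exp_ne_one hsne) (exp_ne_neg_one hsne)
  have hhalf : ((1:ℂ) - Complex.exp (θ*I)^2) ^ ((1:ℂ)/2) = s :=
    cpow_half_unique _ _ hwre hre hz2
  rw [hhalf]
  have hI : (I:ℂ) = Complex.exp (((π/2 : ℝ):ℂ)*I) := by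
    rw [Complex.exp_mul_I, ← Complex.ofReal_cos, ← Complex.ofReal_sin,
      Real.cos_pi_div_two, Real.sin_pi_div_two]
    simp
  have hsub : Complex.exp (θ*I) - I
      = Complex.exp ((((θ + π/2)/2 : ℝ))*I) * (2*I*((Real.sin (θ/2 - π/4) : ℝ):ℂ)) := by
    have h := exp_sub_exp θ (π/2)
    rw [← hI, show ((θ - π/2)/2 : ℝ) = θ/2 - π/4 by ring] at h
    exact h
  have hcomb : Complex.exp ((θ/2 - 3*π/4 : ℝ)*I) * Complex.exp ((((θ + π/2)/2 : ℝ))*I)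
      = Complex.exp ((θ - π/2 : ℝ)*I) := by
    rw [exp_mul_I_add, show (θ/2 - 3*π/4 + (θ + π/2)/2 : ℝ) = θ - π/2 by ring]
  have e3' : Complex.exp ((θ - π/2 : ℝ)*I)
      = Complex.exp ((θ:ℝ)*I) * Complex.exp ((-(π/2) : ℝ)*I) := by
    rw [exp_mul_I_add, show (θ + -(π/2) : ℝ) = θ - π/2 by ring]
  have e4' : Complex.exp ((-(π/2) : ℝ)*I) = -I := by
    rw [Complex.exp_mul_I, ← Complex.ofReal_cos, ← Complex.ofReal_sin,
      Real.cos_neg, Real.sin_neg, Real.cos_pi_div_two, Real.sin_pi_div_two]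
    simp
  have hnum : s * (Complex.exp (θ*I) - I)
      = ((2 * r * Real.sin (θ/2 - π/4) : ℝ) : ℂ) * Complex.exp ((θ:ℝ)*I) := by
    rw [hs, hsub, mul_assoc, ← mul_assoc (Complex.exp ((θ/2 - 3*π/4 : ℝ)*I)), hcomb, e3', e4']
    push_cast [-Complex.ofReal_sin]
    linear_combination (-2*(r:ℂ) * Complex.exp ((θ:ℝ)*I) * ((Real.sin (θ/2 - π/4) : ℝ):ℂ)) * Complex.I_sq
  rw [div_eq_iff (Complex.exp_ne_zero _)]
  exact hnum

/-- Boundary property of the operator `T₂`: on the unit circle (away from the points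
`1, −1, i`), `ζ·(T₂f(ζ)/R(ζ))²` is a nonnegative real number, i.e. `T₂f(ζ)` lies on the
real line spanned by `X(ζ) = R(ζ)/√ζ`; in particular `T₂f` satisfies the boundary
conditions `Im((1+i)T₂f) = 0`, `Im((1−i)T₂f) = 0`, `Im T₂f = 0` on the three arcs
of the circle determined by `1, i, −1`. -/
theorem weightedT2_boundary_conditions (R : ℂ → ℂ)
    (hRcont : ContinuousOn R (closedBall (0 : ℂ) 1))
    (hRpow : ∀ ζ ∈ closedBall (0 : ℂ) 1,
      (R ζ) ^ 4 = -((ζ ^ 2 - 1) * (ζ - Complex.I) ^ 2))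
    (hR0 : R 0 = Complex.exp (3 * Real.pi * Complex.I / 4))
    (f : ℂ → ℂ) (hf : Continuous f)
    (hsupp : HasCompactSupport f) (hsupp' : tsupport f ⊆ ball (0 : ℂ) 1) :
    (∀ ζ : ℂ, ‖ζ‖ = 1 → ζ ≠ 1 → ζ ≠ -1 → ζ ≠ Complex.I →
      (ζ * (weightedT2 R f ζ / R ζ) ^ 2).im = 0 ∧
      0 ≤ (ζ * (weightedT2 R f ζ / R ζ) ^ 2).re) ∧
    (∀ θ : ℝ, θ ∈ Set.Ioo 0 (π / 2) →
      ((1 + Complex.I) * weightedT2 R f (Complex.exp (θ * Complex.I))).im = 0) ∧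
    (∀ θ : ℝ, θ ∈ Set.Ioo (π / 2) π →
      ((1 - Complex.I) * weightedT2 R f (Complex.exp (θ * Complex.I))).im = 0) ∧
    (∀ θ : ℝ, θ ∈ Set.Ioo π (2 * π) →
      (weightedT2 R f (Complex.exp (θ * Complex.I))).im = 0) := by
  have hπ0 := Real.pi_pos
  have hRsq := R_sq_eq R hRcont hRpow hR0
  refine ⟨?_, ?_, ?_, ?_⟩
  · intro ζ hζ h1 h2 h3
    obtain ⟨him, hre, _⟩ := bullet1 R f hRpow ζ hζ h1 h2 h3
    exact ⟨him, hre⟩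
  · -- arc1: θ ∈ (0, π/2)
    rintro θ ⟨h0, hlt⟩
    set ζ : ℂ := Complex.exp (θ * I) with hζdef
    have hsinpos : 0 < Real.sin θ := Real.sin_pos_of_pos_of_lt_pi h0 (by linarith)
    have hsne : Real.sin θ ≠ 0 := ne_of_gt hsinpos
    have hcos : 0 < Real.cos θ := Real.cos_pos_of_mem_Ioo ⟨by linarith, by linarith⟩
    have habs : ‖ζ‖ = 1 := Complex.norm_exp_ofReal_mul_I θ
    have hne1 : ζ ≠ 1 := exp_ne_one hsne
    have hne2 : ζ ≠ -1 := exp_ne_neg_one hsne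
    have hneI : ζ ≠ I := by
      intro hh
      have := congrArg Complex.re hh
      rw [hζdef] at this
      rw [Complex.exp_ofReal_mul_I_re, Complex.I_re] at this
      linarith
    obtain ⟨him, hre, hW2⟩ := bullet1 R f hRpow ζ habs hne1 hne2 hneI
    rw [hRsq ζ (exp_theta_mem θ) hne1 hne2 hneI] at hW2
    rw [show ((1 - ζ^2) ^ ((1:ℂ)/2) * (ζ - I)) / ζ
        = (1 - ζ^2) ^ ((1:ℂ)/2) * (ζ - I) / ζ from rfl, hζdef] at hW2
    rw [arc1_val h0 (by linarith)] at hW2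
    set c : ℝ := (ζ * (weightedT2 R f ζ / R ζ) ^ 2).re with hc
    set p : ℝ := Real.sqrt (2*Real.sin θ) * Real.sin (θ/2 - π/4) with hp
    have hples : Real.sin (θ/2 - π/4) ≤ 0 := by
      rw [show (θ/2 - π/4 : ℝ) = -(π/4 - θ/2) by ring, Real.sin_neg, neg_nonpos]
      exact Real.sin_nonneg_of_nonneg_of_le_pi (by linarith) (by linarith)
    have hple : p ≤ 0 := mul_nonpos_of_nonneg_of_nonpos (Real.sqrt_nonneg _) hples
    have hsq : ((1 + I) * weightedT2 R f ζ)^2 = ((-(4*c*p) : ℝ) : ℂ) := by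
      rw [mul_pow, hW2]
      push_cast [-Complex.ofReal_sin]
      linear_combination ((c:ℂ) * (p:ℂ) * (2*I + 4)) * Complex.I_sq
    apply im_eq_zero_of_sq
    · rw [hsq, Complex.ofReal_im]
    · rw [hsq, Complex.ofReal_re]
      nlinarith [mul_nonneg hre (neg_nonneg.2 hple)]
  · -- arc2: θ ∈ (π/2, π)
    rintro θ ⟨h0, hlt⟩
    set ζ : ℂ := Complex.exp (θ * I) with hζdef
    have hsinpos : 0 < Real.sin θ := Real.sin_pos_of_pos_of_lt_pi (by linarith) hlt
    have hsne : Real.sin θ ≠ 0 := ne_of_gt hsinpos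
    have hcos : Real.cos θ < 0 := Real.cos_neg_of_pi_div_two_lt_of_lt h0 (by linarith)
    have habs : ‖ζ‖ = 1 := Complex.norm_exp_ofReal_mul_I θ
    have hne1 : ζ ≠ 1 := exp_ne_one hsne
    have hne2 : ζ ≠ -1 := exp_ne_neg_one hsne
    have hneI : ζ ≠ I := by
      intro hh
      have := congrArg Complex.re hh
      rw [hζdef] at this
      rw [Complex.exp_ofReal_mul_I_re, Complex.I_re] at this
      linarith
    obtain ⟨him, hre, hW2⟩ := bullet1 R f hRpow ζ habs hne1 hne2 hneI
    rw [hRsq ζ (exp_theta_mem θ) hne1 hne2 hneI] at hW2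
    rw [hζdef] at hW2
    rw [arc1_val (by linarith) hlt] at hW2
    set c : ℝ := (ζ * (weightedT2 R f ζ / R ζ) ^ 2).re with hc
    set p : ℝ := Real.sqrt (2*Real.sin θ) * Real.sin (θ/2 - π/4) with hp
    have hples : 0 ≤ Real.sin (θ/2 - π/4) :=
      Real.sin_nonneg_of_nonneg_of_le_pi (by linarith) (by linarith)
    have hple : 0 ≤ p := mul_nonneg (Real.sqrt_nonneg _) hples
    have hsq : ((1 - I) * weightedT2 R f ζ)^2 = ((4*c*p : ℝ) : ℂ) := by
      rw [mul_pow, hW2]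
      push_cast [-Complex.ofReal_sin]
      linear_combination ((c:ℂ) * (p:ℂ) * (2*I - 4)) * Complex.I_sq
    apply im_eq_zero_of_sq
    · rw [hsq, Complex.ofReal_im]
    · rw [hsq, Complex.ofReal_re]
      nlinarith [mul_nonneg hre hple]
  · -- arc3: θ ∈ (π, 2π)
    rintro θ ⟨h0, hlt⟩
    set ζ : ℂ := Complex.exp (θ * I) with hζdef
    have hsinneg : Real.sin θ < 0 := by
      have h := Real.sin_pos_of_pos_of_lt_pi (x := θ - π) (by linarith) (by linarith)
      rw [Real.sin_sub_pi] at h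
      linarith
    have hsne : Real.sin θ ≠ 0 := ne_of_lt hsinneg
    have habs : ‖ζ‖ = 1 := Complex.norm_exp_ofReal_mul_I θ
    have hne1 : ζ ≠ 1 := exp_ne_one hsne
    have hne2 : ζ ≠ -1 := exp_ne_neg_one hsne
    have hneI : ζ ≠ I := by
      intro hh
      have := congrArg Complex.im hh
      rw [hζdef] at this
      rw [Complex.exp_ofReal_mul_I_im, Complex.I_im] at this
      linarith
    obtain ⟨him, hre, hW2⟩ := bullet1 R f hRpow ζ habs hne1 hne2 hneI
    rw [hRsq ζ (exp_theta_mem θ) hne1 hne2 hneI] at hW2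
    rw [hζdef] at hW2
    rw [arc3_val h0 hlt] at hW2
    set c : ℝ := (ζ * (weightedT2 R f ζ / R ζ) ^ 2).re with hc
    have hples : 0 ≤ Real.sin (θ/2 - π/4) :=
      Real.sin_nonneg_of_nonneg_of_le_pi (by linarith) (by linarith)
    have hple : 0 ≤ 2 * Real.sqrt (-(2*Real.sin θ)) * Real.sin (θ/2 - π/4) :=
      mul_nonneg (mul_nonneg (by norm_num) (Real.sqrt_nonneg _)) hples
    have hsq : (weightedT2 R f ζ)^2
        = ((c * (2 * Real.sqrt (-(2*Real.sin θ)) * Real.sin (θ/2 - π/4)) : ℝ) : ℂ) := by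
      rw [hW2]
      push_cast [-Complex.ofReal_sin]
      ring
    apply im_eq_zero_of_sq
    · rw [hsq, Complex.ofReal_im]
    · rw [hsq, Complex.ofReal_re]
      exact mul_nonneg hre hple
end

section
/- For ζ on the unit circle, write ζ = e^{iθ} with θ ∈ (0, 2π), and set P(ζ) = −(ζ²−1)(ζ−i)²/ζ². Then P(ζ) is a real number for every ζ ∈ b𝔻; moreover P(ζ) ≤ 0 for θ ∈ (0, π/2) ∪ (π/2, π) and P(ζ) ≥ 0 for θ ∈ (π, 2π). (Equivalently, the function X(ζ) = R(ζ)/√ζ satisfies X(ζ)⁴ ∈ ℝ on b𝔻 and arg X is constant on each of the arcs {e^{iθ} : 0<θ<π/2}, {e^{iθ} : π/2<θ<π}, {e^{iθ} : π<θ<2π}, equal there to 3π/4, π/4 and 0 respectively.) -/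
open Real

private lemma P_key (θ : ℝ) :
    -((((Complex.exp (θ * Complex.I)) ^ 2 - 1)
        * (Complex.exp (θ * Complex.I) - Complex.I) ^ 2)
        / (Complex.exp (θ * Complex.I)) ^ 2)
      = ((4 * Real.sin θ * (Real.sin θ - 1) : ℝ) : ℂ) := by
  have hζ : Complex.exp (θ * Complex.I)
      = (Real.cos θ : ℂ) + (Real.sin θ : ℂ) * Complex.I := by
    rw [Complex.exp_mul_I, Complex.ofReal_cos, Complex.ofReal_sin]
  have h : (Real.cos θ : ℂ) ^ 2 + (Real.sin θ : ℂ) ^ 2 = 1 := by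
    norm_cast; exact Real.cos_sq_add_sin_sq θ
  have hD : (Complex.exp (θ * Complex.I)) ^ 2 ≠ 0 :=
    pow_ne_zero _ (Complex.exp_ne_zero _)
  set a := (Real.cos θ : ℂ) with ha
  set b := (Real.sin θ : ℂ) with hb
  have hR : ((4 * Real.sin θ * (Real.sin θ - 1) : ℝ) : ℂ) = 4 * b * (b - 1) := by
    rw [hb]; push_cast; ring
  rw [neg_div', div_eq_iff hD, hζ, hR]
  linear_combination (-a ^ 2 - 4 * a * b * Complex.I + 2 * a * Complex.I
      + 3 * b ^ 2 - 2 * b + 1) * h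
    + (-b ^ 4 * Complex.I ^ 2 + 2 * b ^ 3 * Complex.I ^ 2 - b ^ 2 * Complex.I ^ 2
      - 4 * a * b ^ 3 * Complex.I + 6 * a * b ^ 2 * Complex.I - 2 * a * b * Complex.I
      - 6 * a ^ 2 * b ^ 2 + 6 * a ^ 2 * b - a ^ 2 + 2 * b ^ 2 - 2 * b + 1
      - 3 * b ^ 4 + 2 * b ^ 3) * Complex.I_sq

/-- The function `P(ζ) = −(ζ²−1)(ζ−i)²/ζ²` (which equals `X(ζ)⁴` for
`X(ζ) = R(ζ)/√ζ`) is real on the unit circle; it is `≤ 0` on the arcs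
`{e^{iθ} : 0<θ<π/2}` and `{e^{iθ} : π/2<θ<π}`, and `≥ 0` on `{e^{iθ} : π<θ<2π}`. -/
theorem P_real_and_signs_on_circle :
    (∀ ζ : ℂ, ‖ζ‖ = 1 →
      (-(((ζ ^ 2 - 1) * (ζ - Complex.I) ^ 2) / ζ ^ 2)).im = 0) ∧
    (∀ θ : ℝ, θ ∈ Set.Ioo 0 (π / 2) ∪ Set.Ioo (π / 2) π →
      (-((((Complex.exp (θ * Complex.I)) ^ 2 - 1)
        * (Complex.exp (θ * Complex.I) - Complex.I) ^ 2)
        / (Complex.exp (θ * Complex.I)) ^ 2)).re ≤ 0) ∧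
    (∀ θ : ℝ, θ ∈ Set.Ioo π (2 * π) →
      0 ≤ (-((((Complex.exp (θ * Complex.I)) ^ 2 - 1)
        * (Complex.exp (θ * Complex.I) - Complex.I) ^ 2)
        / (Complex.exp (θ * Complex.I)) ^ 2)).re) := by
  refine ⟨?_, ?_, ?_⟩
  · intro ζ hζ
    have hz : ζ = Complex.exp (Complex.arg ζ * Complex.I) := by
      conv_lhs => rw [← Complex.norm_mul_exp_arg_mul_I ζ]
      rw [hζ, Complex.ofReal_one, one_mul]
    rw [hz, P_key]
    exact Complex.ofReal_im _
  · intro θ hθ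
    rw [P_key]
    have h1 : 0 < Real.sin θ := by
      rcases hθ with h | h
      · exact Real.sin_pos_of_pos_of_lt_pi h.1 (h.2.trans (by linarith [Real.pi_pos]))
      · exact Real.sin_pos_of_pos_of_lt_pi (lt_trans (by positivity) h.1) h.2
    have h2 : Real.sin θ ≤ 1 := Real.sin_le_one θ
    rw [Complex.ofReal_re]
    nlinarith
  · intro θ hθ
    rw [P_key, Complex.ofReal_re]
    have h1 : Real.sin θ ≤ 0 := by
      have := Real.sin_pos_of_pos_of_lt_pi (x := θ - π) (by linarith [hθ.1])
        (by linarith [hθ.2])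
      rw [Real.sin_sub_pi] at this
      linarith
    nlinarith
end

section
/- Let f : ℂ → ℂ be continuous with compact support contained in the open unit disc 𝔻. Then the function h(ζ) = ζ^{−1}·conj( Tf(1/conj(ζ)) ) is holomorphic (complex-differentiable) on 𝔻∖{0}, and 0 is a removable singularity of h: h extends to a holomorphic function on all of 𝔻 (equivalently, h is bounded near 0, with limit −conj( (1/(2πi))∬_𝔻 f(t) dt∧dt̄ ) as ζ → 0). -/
open Metric MeasureTheory

/-- For `f` continuous with compact support in the unit disc, the function
`h(ζ) = ζ⁻¹ · conj(Tf(1/conj ζ))` is holomorphic on `𝔻 ∖ {0}` and extends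
holomorphically across `0`, with value `−conj((1/(2πi)) ∬_𝔻 f(t) dt∧dt̄)`
(i.e. `−conj(−(1/π) ∬_𝔻 f dA)`) at `0`. -/
theorem reflected_cauchyGreen_holomorphic (f : ℂ → ℂ) (hf : Continuous f)
    (hsupp : HasCompactSupport f) (hsupp' : tsupport f ⊆ ball (0 : ℂ) 1)
    (h : ℂ → ℂ)
    (hdef : ∀ ζ : ℂ, h ζ = ζ⁻¹ * (starRingEnd ℂ) (cauchyGreen f (1 / (starRingEnd ℂ) ζ))) :
    (∀ ζ ∈ ball (0 : ℂ) 1 \ {0}, DifferentiableAt ℂ h ζ) ∧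
    ∃ H : ℂ → ℂ, (∀ ζ ∈ ball (0 : ℂ) 1, DifferentiableAt ℂ H ζ) ∧
      (∀ ζ ∈ ball (0 : ℂ) 1 \ {0}, H ζ = h ζ) ∧
      H 0 = -(starRingEnd ℂ) (-(Real.pi : ℂ)⁻¹ * ∫ t in ball (0 : ℂ) 1, f t) := by
  obtain ⟨r, ⟨hr0, hr1⟩, hsub⟩ :=
    exists_pos_lt_subset_ball one_pos (isClosed_tsupport f) hsupp'
  obtain ⟨M, hM⟩ := hf.bounded_above_of_compact_support hsupp
  have hM0 : 0 ≤ M := (norm_nonneg _).trans (hM 0)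
  set c : ℂ := -(Real.pi : ℂ)⁻¹ with hc
  set F : ℂ → ℂ → ℂ := fun ζ t => (starRingEnd ℂ) (f t) / (ζ * (starRingEnd ℂ) t - 1) with hF
  set H : ℂ → ℂ := fun ζ => c * ∫ t in ball (0 : ℂ) 1, F ζ t with hHdef
  -- denominator bound on the support
  have hden : ∀ ζ : ℂ, ‖ζ‖ ≤ 1 → ∀ t ∈ tsupport f, 1 - r ≤ ‖ζ * (starRingEnd ℂ) t - 1‖ := by
    intro ζ hζ t ht
    have htr : ‖t‖ < r := by simpa using hsub ht
    have h1 : ‖ζ * (starRingEnd ℂ) t‖ ≤ r := by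
      rw [norm_mul, RCLike.norm_conj]
      calc ‖ζ‖ * ‖t‖ ≤ 1 * r := by
            apply mul_le_mul hζ htr.le (norm_nonneg _) zero_le_one
        _ = r := one_mul r
    calc 1 - r ≤ 1 - ‖ζ * (starRingEnd ℂ) t‖ := by linarith
      _ ≤ ‖1 - ζ * (starRingEnd ℂ) t‖ := by
          simpa using norm_sub_norm_le (1 : ℂ) (ζ * (starRingEnd ℂ) t)
      _ = ‖ζ * (starRingEnd ℂ) t - 1‖ := by rw [norm_sub_rev]
  have hden' : ∀ ζ : ℂ, ‖ζ‖ ≤ 1 → ∀ t ∈ tsupport f, ζ * (starRingEnd ℂ) t - 1 ≠ 0 := by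
    intro ζ hζ t ht h0
    have := hden ζ hζ t ht
    rw [h0, norm_zero] at this
    linarith
  -- measurability
  have hmeas : ∀ ζ : ℂ, Measurable (F ζ) := by
    intro ζ
    exact ((Complex.continuous_conj.measurable.comp hf.measurable).div
      (((Complex.continuous_conj.measurable).const_mul ζ).sub measurable_const))
  -- F is bounded
  have hFbound : ∀ ζ : ℂ, ‖ζ‖ ≤ 1 → ∀ t : ℂ, ‖F ζ t‖ ≤ M / (1 - r) := by
    intro ζ hζ t
    by_cases ht : t ∈ tsupport f
    · rw [hF]
      simp only [norm_div, RCLike.norm_conj]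
      apply div_le_div₀ hM0 (hM t) (by linarith) (hden ζ hζ t ht)
    · have : f t = 0 := image_eq_zero_of_notMem_tsupport ht
      simp only [hF, this, map_zero, zero_div, norm_zero]
      apply div_nonneg hM0 (by linarith)
  have hint : ∀ ζ : ℂ, ‖ζ‖ ≤ 1 → IntegrableOn (F ζ) (ball (0:ℂ) 1) := by
    intro ζ hζ
    exact Measure.integrableOn_of_bounded measure_ball_lt_top.ne
      (hmeas ζ).aestronglyMeasurable
      (Filter.Eventually.of_forall fun t => hFbound ζ hζ t)
  -- the derivative integrand
  set F' : ℂ → ℂ → ℂ := fun ζ t =>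
    -((starRingEnd ℂ) (f t) * (starRingEnd ℂ) t) / (ζ * (starRingEnd ℂ) t - 1) ^ 2 with hF'
  have hmeas' : ∀ ζ : ℂ, Measurable (F' ζ) := by
    intro ζ
    exact (((Complex.continuous_conj.measurable.comp hf.measurable).mul
      Complex.continuous_conj.measurable).neg.div
      ((((Complex.continuous_conj.measurable).const_mul ζ).sub measurable_const).pow
        measurable_const))
  -- differentiability of H on the ball
  have HDiff : ∀ ζ0 ∈ ball (0:ℂ) 1, DifferentiableAt ℂ H ζ0 := by
    intro ζ0 hζ0
    rw [mem_ball_zero_iff] at hζ0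
    set ε : ℝ := (1 - ‖ζ0‖) / 2 with hε
    have hεpos : 0 < ε := by rw [hε]; linarith
    have hball : ∀ ζ ∈ ball ζ0 ε, ‖ζ‖ < 1 := by
      intro ζ hζ
      rw [mem_ball, dist_eq_norm] at hζ
      have h1 : ‖ζ‖ ≤ ‖ζ - ζ0‖ + ‖ζ0‖ := by
        simpa using norm_add_le (ζ - ζ0) ζ0
      rw [hε] at hζ
      linarith
    have key := hasDerivAt_integral_of_dominated_loc_of_deriv_le
      (μ := volume.restrict (ball (0:ℂ) 1)) (F := F) (F' := F') (x₀ := ζ0)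
      (bound := fun _ => M / (1 - r) ^ 2) (ball_mem_nhds ζ0 hεpos)
      (Filter.Eventually.of_forall fun ζ => (hmeas ζ).aestronglyMeasurable)
      (hint ζ0 hζ0.le)
      (hmeas' ζ0).aestronglyMeasurable
      (Filter.Eventually.of_forall ?_)
      (integrableOn_const measure_ball_lt_top.ne enorm_ne_top)
      (Filter.Eventually.of_forall ?_)
    · exact (key.2.const_mul c).differentiableAt
    · -- bound on F'
      intro t ζ hζ
      by_cases ht : t ∈ tsupport f
      · have h1 : 1 - r ≤ ‖ζ * (starRingEnd ℂ) t - 1‖ := hden ζ (hball ζ hζ).le t ht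
        have htr : ‖t‖ < r := by simpa using hsub ht
        rw [hF']
        simp only [norm_div, norm_neg, norm_mul, norm_pow, RCLike.norm_conj]
        have hnum : ‖f t‖ * ‖t‖ ≤ M := by
          calc ‖f t‖ * ‖t‖ ≤ M * 1 :=
                mul_le_mul (hM t) (htr.le.trans hr1.le) (norm_nonneg _) hM0
            _ = M := mul_one M
        exact div_le_div₀ hM0 hnum (pow_pos (by linarith) 2) (pow_le_pow_left₀ (by linarith) h1 2)
      · simp only [hF', image_eq_zero_of_notMem_tsupport ht, map_zero, zero_mul, neg_zero,
          zero_div, norm_zero]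
        positivity
    · -- differentiability of F in ζ
      intro t ζ hζ
      by_cases ht : t ∈ tsupport f
      · have hne := hden' ζ (hball ζ hζ).le t ht
        have hu : HasDerivAt (fun z : ℂ => z * (starRingEnd ℂ) t - 1) ((starRingEnd ℂ) t) ζ := by
          simpa using ((hasDerivAt_id ζ).mul_const ((starRingEnd ℂ) t)).sub_const 1
        have hd := (hasDerivAt_const ζ ((starRingEnd ℂ) (f t))).div hu hne
        refine hd.congr_deriv ?_
        rw [hF']
        field_simp
        ring
      · have hzero : (fun z : ℂ => F z t) = fun _ => 0 := by
          funext z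
          simp [hF, image_eq_zero_of_notMem_tsupport ht]
        have hzero' : F' ζ t = 0 := by
          simp [hF', image_eq_zero_of_notMem_tsupport ht]
        rw [hzero', hzero]
        exact hasDerivAt_const ζ 0
  -- h agrees with H away from 0
  have hc' : (starRingEnd ℂ) c = c := by rw [hc]; simp
  have hEq : ∀ ζ : ℂ, ζ ≠ 0 → H ζ = h ζ := by
    intro ζ hζ
    have e1 : ∀ t : ℂ, F ζ t = ζ⁻¹ * (starRingEnd ℂ) (f t / (t - 1 / (starRingEnd ℂ) ζ)) := by
      intro t
      symm
      rw [map_div₀, map_sub]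
      have h1 : (starRingEnd ℂ) (1 / (starRingEnd ℂ) ζ) = 1 / ζ := by simp
      rw [h1]
      have key : (starRingEnd ℂ) t - 1 / ζ = (ζ * (starRingEnd ℂ) t - 1) / ζ := by
        field_simp
      rw [key, div_div_eq_mul_div, mul_comm ((starRingEnd ℂ) (f t)) ζ, ← mul_div_assoc,
        ← mul_assoc, inv_mul_cancel₀ hζ, one_mul]
    calc H ζ = c * ∫ t in ball (0:ℂ) 1, F ζ t := rfl
      _ = c * ∫ t in ball (0:ℂ) 1,
            ζ⁻¹ * (starRingEnd ℂ) (f t / (t - 1 / (starRingEnd ℂ) ζ)) := by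
          congr 1
          exact integral_congr_ae (Filter.Eventually.of_forall fun t => e1 t)
      _ = ζ⁻¹ * (c * ∫ t in ball (0:ℂ) 1,
            (starRingEnd ℂ) (f t / (t - 1 / (starRingEnd ℂ) ζ))) := by
          rw [integral_const_mul]; ring
      _ = h ζ := by rw [hdef, cauchyGreen, map_mul, hc', ← integral_conj]
  -- value at 0
  have hval : H 0 = -(starRingEnd ℂ) (-(Real.pi : ℂ)⁻¹ * ∫ t in ball (0 : ℂ) 1, f t) := by
    have h1 : H 0 = c * ∫ t in ball (0:ℂ) 1, -((starRingEnd ℂ) (f t)) := by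
      show c * (∫ t in ball (0:ℂ) 1, F 0 t) = _
      congr 1
      apply integral_congr_ae
      apply Filter.Eventually.of_forall
      intro t
      show (starRingEnd ℂ) (f t) / ((0:ℂ) * (starRingEnd ℂ) t - 1) = _
      rw [zero_mul, zero_sub, div_neg, div_one]
    rw [h1, integral_neg, integral_conj, map_mul]
    have hc'' : (starRingEnd ℂ) (-(Real.pi : ℂ)⁻¹) = c := by rw [hc]; simp
    rw [hc'', hc]
    ring
  refine ⟨?_, H, HDiff, fun ζ hζ => hEq ζ hζ.2, hval⟩
  intro ζ hζ
  obtain ⟨hζb, hζ0⟩ := hζ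
  have hζ0' : ζ ≠ 0 := hζ0
  apply (HDiff ζ hζb).congr_of_eventuallyEq
  filter_upwards [isOpen_compl_singleton.mem_nhds hζ0'] with x hx
  exact (hEq x hx).symm
end

section
/- Let u : ℝ → ℂ be a C¹ map which is 2π-periodic and whose image u(ℝ) is contained in a finite union of real lines through the origin, i.e. u(ℝ) ⊆ ⋃_{k=1}^m { t·b_k : t ∈ ℝ } for some nonzero complex numbers b₁,…,b_m. Then the signed area swept by the closed curve u vanishes: ∫₀^{2π} Im( conj(u(θ))·u′(θ) ) dθ = 0. -/
open Real

/-- A closed `C¹` curve whose image lies in a finite union of real lines through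
the origin sweeps zero signed area: `∫₀^{2π} Im(conj(u)·u′) dθ = 0`. -/
theorem signed_area_zero_of_image_in_lines (u : ℝ → ℂ)
    (hu : ContDiff ℝ 1 u) (hper : Function.Periodic u (2 * π))
    (m : ℕ) (b : Fin m → ℂ) (hb : ∀ k, b k ≠ 0)
    (himg : ∀ θ : ℝ, ∃ k : Fin m, ∃ t : ℝ, u θ = t • b k) :
    ∫ θ in (0 : ℝ)..(2 * π), ((starRingEnd ℂ) (u θ) * deriv u θ).im = 0 := by
  have key : ∀ θ : ℝ, ((starRingEnd ℂ) (u θ) * deriv u θ).im = 0 := by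
    intro θ
    by_cases hw : u θ = 0
    · simp [hw]
    · set w := u θ with hwdef
      have hC : IsClosed (⋃ k ∈ {k : Fin m | ¬ ∃ t : ℝ, u θ = t • b k},
          (Submodule.span ℝ {b k} : Set ℂ)) := by
        apply Set.Finite.isClosed_biUnion (Set.toFinite _)
        intro k _
        exact (Submodule.span ℝ {b k}).closed_of_finiteDimensional
      have hnot : u θ ∉ ⋃ k ∈ {k : Fin m | ¬ ∃ t : ℝ, u θ = t • b k},
          (Submodule.span ℝ {b k} : Set ℂ) := by
        simp only [Set.mem_iUnion, Set.mem_setOf_eq]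
        rintro ⟨k, hk, hmem⟩
        rw [SetLike.mem_coe, Submodule.mem_span_singleton] at hmem
        obtain ⟨t, ht⟩ := hmem
        exact hk ⟨t, ht.symm⟩
      have hev : ∀ᶠ s in nhds θ, ∃ r : ℝ, u s = r • w := by
        have hcont : ContinuousAt u θ := hu.continuous.continuousAt
        have hmem := hcont.eventually_mem (hC.isOpen_compl.mem_nhds hnot)
        filter_upwards [hmem] with s hs
        obtain ⟨k, t, hk⟩ := himg s
        have hkgood : ∃ t' : ℝ, u θ = t' • b k := by
          by_contra hkk
          refine hs (Set.mem_biUnion hkk ?_)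
          rw [hk]
          exact Submodule.smul_mem _ t (Submodule.mem_span_singleton_self _)
        obtain ⟨t', ht'⟩ := hkgood
        have ht'0 : t' ≠ 0 := by
          rintro rfl
          rw [zero_smul] at ht'
          exact hw ht'
        refine ⟨t * t'⁻¹, ?_⟩
        have hw' : w = t' • b k := ht'
        rw [hk, hw', smul_smul, mul_assoc, inv_mul_cancel₀ ht'0, mul_one]
      have hf0 : (fun s => ((starRingEnd ℂ) w * u s).im) =ᶠ[nhds θ] fun _ => 0 := by
        filter_upwards [hev] with s hs
        obtain ⟨r, hr⟩ := hs
        rw [hr]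
        simp [mul_smul_comm, Complex.smul_im, Complex.mul_im]
        ring
      have hd : HasDerivAt u (deriv u θ) θ :=
        ((hu.differentiable one_ne_zero) θ).hasDerivAt
      have h1 : HasDerivAt (fun s => (starRingEnd ℂ) w * u s)
          ((starRingEnd ℂ) w * deriv u θ) θ := hd.const_mul _
      have h2 : HasDerivAt (fun s => ((starRingEnd ℂ) w * u s).im)
          (((starRingEnd ℂ) w * deriv u θ)).im θ := by
        exact Complex.imCLM.hasFDerivAt.comp_hasDerivAt θ h1
      have h3 : HasDerivAt (fun _ : ℝ => (0 : ℝ))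
          (((starRingEnd ℂ) w * deriv u θ)).im θ :=
        h2.congr_of_eventuallyEq hf0.symm
      exact h3.unique (hasDerivAt_const θ 0)
  simp only [key]
  simp
end

section
/- Let K ⊆ ℂ be a compact convex set, and let z : closure(𝔻) → ℂ be a continuous map such that z(b𝔻) ⊆ K and such that z is holomorphic (complex-differentiable) at every point of the open set G = { ζ ∈ 𝔻 : z(ζ) ∉ K }. Then G is empty; that is, z(closure(𝔻)) ⊆ K. -/
open Metric

/-- Maximum-principle lemma: if `z` is continuous on the closed unit disc, takes
boundary values in a compact convex set `K ⊆ ℂ`, and is holomorphic at every point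
of the open set `G = {ζ ∈ 𝔻 : z(ζ) ∉ K}`, then `G` is empty, i.e.
`z(closure 𝔻) ⊆ K`. -/
theorem image_in_convex_of_boundary_in_convex (K : Set ℂ)
    (hKcomp : IsCompact K) (hKconv : Convex ℝ K)
    (z : ℂ → ℂ) (hzcont : ContinuousOn z (closedBall (0 : ℂ) 1))
    (hbd : ∀ ζ ∈ sphere (0 : ℂ) 1, z ζ ∈ K)
    (hholo : ∀ ζ ∈ ball (0 : ℂ) 1, z ζ ∉ K → DifferentiableAt ℂ z ζ) :
    ∀ ζ ∈ closedBall (0 : ℂ) 1, z ζ ∈ K := by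
  by_contra h
  push_neg at h
  obtain ⟨ζ₀, hζ₀, hz₀⟩ := h
  have hKclosed : IsClosed K := hKcomp.isClosed
  -- ζ₀ is in the open ball
  have hζ₀ball : ζ₀ ∈ ball (0 : ℂ) 1 := by
    rcases lt_or_eq_of_le (mem_closedBall.mp hζ₀) with h1 | h1
    · exact mem_ball.mpr h1
    · exact absurd (hbd ζ₀ (mem_sphere_zero_iff_norm.mpr (by simpa using h1))) hz₀
  -- the set G
  set G : Set ℂ := {ζ | ζ ∈ ball (0 : ℂ) 1 ∧ z ζ ∉ K} with hG
  have hζ₀G : ζ₀ ∈ G := ⟨hζ₀ball, hz₀⟩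
  have hGsub : G ⊆ ball (0 : ℂ) 1 := fun ζ hζ => hζ.1
  have hGsubc : G ⊆ closedBall (0 : ℂ) 1 := hGsub.trans ball_subset_closedBall
  -- continuity at points of the ball
  have hcontAt : ∀ ζ ∈ ball (0 : ℂ) 1, ContinuousAt z ζ := fun ζ hζ =>
    hzcont.continuousAt (Filter.mem_of_superset (isOpen_ball.mem_nhds hζ)
      ball_subset_closedBall)
  -- G is open
  have hGopen : IsOpen G := by
    rw [isOpen_iff_mem_nhds]
    intro ζ hζ
    have h1 : ball (0 : ℂ) 1 ∈ nhds ζ := isOpen_ball.mem_nhds hζ.1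
    have h2 : {ξ | z ξ ∉ K} ∈ nhds ζ :=
      (hcontAt ζ hζ.1).preimage_mem_nhds (hKclosed.isOpen_compl.mem_nhds hζ.2)
    filter_upwards [h1, h2] with ξ hξ1 hξ2 using ⟨hξ1, hξ2⟩
  have hclG : closure G ⊆ closedBall (0 : ℂ) 1 :=
    closure_minimal hGsubc isClosed_closedBall
  -- on the frontier of G, z lands in K
  have hfront : ∀ ζ ∈ frontier G, z ζ ∈ K := by
    intro ζ hζ
    have hζnG : ζ ∉ G := fun h => hζ.2 (by rwa [hGopen.interior_eq])
    have hζcl : ζ ∈ closedBall (0 : ℂ) 1 := hclG hζ.1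
    rcases lt_or_eq_of_le (mem_closedBall.mp hζcl) with h1 | h1
    · by_contra hzK
      exact hζnG ⟨mem_ball.mpr h1, hzK⟩
    · exact hbd ζ (mem_sphere_zero_iff_norm.mpr (by simpa using h1))
  -- separating functional
  obtain ⟨f, u, hfu, huf⟩ := geometric_hahn_banach_closed_point hKconv hKclosed hz₀
  -- realize f as Re (c * ·)
  set c : ℂ := (f 1 : ℝ) - (f Complex.I : ℝ) * Complex.I with hc
  have hfre : ∀ w : ℂ, (c * w).re = f w := by
    intro w
    have hw : w = w.re • (1 : ℂ) + w.im • Complex.I := by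
      simp [Complex.real_smul, Complex.re_add_im]
    rw [show f w = f (w.re • (1 : ℂ) + w.im • Complex.I) by rw [← hw]]
    rw [map_add, map_smul, map_smul]
    simp [hc, Complex.mul_re]
    ring
  -- the holomorphic function
  set g : ℂ → ℂ := fun ζ => Complex.exp (c * z ζ) with hgdef
  have hgnorm : ∀ ζ, ‖g ζ‖ = Real.exp (f (z ζ)) := by
    intro ζ
    rw [hgdef]
    simp only [Complex.norm_exp, hfre]
  have hdiff : DiffContOnCl ℂ g G := by
    constructor
    · intro ζ hζ
      exact ((hholo ζ hζ.1 hζ.2).const_mul c).cexp.differentiableWithinAt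
    · exact (Complex.continuous_exp.comp_continuousOn
        ((continuousOn_const.mul (hzcont.mono hclG))))
  have hbdd : Bornology.IsBounded G :=
    (isBounded_closedBall (x := (0:ℂ)) (r := 1)).subset hGsubc
  have hle : ‖g ζ₀‖ ≤ Real.exp u := by
    apply Complex.norm_le_of_forall_mem_frontier_norm_le hbdd hdiff
    · intro ζ hζ
      rw [hgnorm]
      exact Real.exp_le_exp.mpr (le_of_lt (hfu _ (hfront ζ hζ)))
    · exact subset_closure hζ₀G
  rw [hgnorm] at hle
  exact absurd (Real.exp_le_exp.mp hle) (not_le.mpr huf)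
end
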